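/- arXiv:1708.04065 — 7 statements merged into one kernel-verified Lean document; each statement's English description precedes it below -/
import Mathlib

section
/- Let A be a (possibly non-commutative) associative unital ring, p a prime, and let m ≤ n be non-negative integers. Then for all a₁,...,a_s, b₁,...,b_t ∈ A one has the identity [V^n(⟨a₁⟩⋯⟨a_s⟩), V^m(⟨b₁⟩⋯⟨b_t⟩)] = p^m · V^n([⟨a₁⟩⋯⟨a_s⟩, ⟨b₁^{p^{n−m}}⟩⋯⟨b_t^{p^{n−m}}⟩]) in the product ring A^{ℕ₀}, where [x,y] := xy − yx. -/
/-- Verschiebung operator: `V(a₀,a₁,...) = p·(0,a₀,a₁,...)`. -/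
def Vb (p : ℕ) {A : Type*} [Ring A] (a : ℕ → A) : ℕ → A
  | 0 => 0
  | n + 1 => (p : A) * a n

/-- Teichmüller element: `⟨a⟩ = (a, a^p, a^{p²}, ...)`. -/
def tm (p : ℕ) {A : Type*} [Ring A] (a : A) : ℕ → A := fun n => a ^ p ^ n

lemma Vb_iterate {A : Type*} [Ring A] (p : ℕ) :
    ∀ (n : ℕ) (f : ℕ → A) (k : ℕ),
      (Vb p)^[n] f k = if n ≤ k then (p : A) ^ n * f (k - n) else 0 := by
  intro n
  induction n with
  | zero => intro f k; simp
  | succ n ih =>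
    intro f k
    rw [Function.iterate_succ_apply']
    cases k with
    | zero => simp [Vb]
    | succ j =>
      show (p : A) * (Vb p)^[n] f j = _
      rw [ih]
      by_cases h : n ≤ j
      · rw [if_pos h, if_pos (by omega)]
        have : j + 1 - (n + 1) = j - n := by omega
        rw [this, pow_succ', mul_assoc]
      · rw [if_neg h, if_neg (by omega), mul_zero]

/-- shift ring hom on the product ring -/
noncomputable def shiftHom (A : Type*) [Ring A] (d : ℕ) : (ℕ → A) →+* (ℕ → A) :=
  Pi.ringHom (fun k => Pi.evalRingHom (fun _ : ℕ => A) (k + d))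

lemma prod_shift {A : Type*} [Ring A] (p d : ℕ) (bs : List A) (k : ℕ) :
    (bs.map (fun b => tm p (b ^ p ^ d))).prod k = (bs.map (tm p)).prod (k + d) := by
  have h1 : (bs.map (fun b => tm p (b ^ p ^ d))).prod
      = shiftHom A d ((bs.map (tm p)).prod) := by
    rw [map_list_prod, List.map_map]
    congr 1
    apply List.map_congr_left
    intro b _
    funext j
    show (b ^ p ^ d) ^ p ^ j = b ^ p ^ (j + d)
    rw [← pow_mul, ← pow_add, Nat.add_comm d j]
  rw [h1]; rfl

lemma aux_comm {A : Type*} [Ring A] (a b : ℕ) (x y : A) :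
    (a : A) * x * ((b : A) * y) - (b : A) * y * ((a : A) * x)
      = (b : A) * ((a : A) * (x * y - y * x)) := by
  simp only [← nsmul_eq_mul, smul_mul_assoc, mul_smul_comm, smul_smul, smul_sub]
  rw [Nat.mul_comm a b]

/-- for `m ≤ n`,
`[V^n(⟨a₁⟩⋯⟨a_s⟩), V^m(⟨b₁⟩⋯⟨b_t⟩)] = p^m · V^n([⟨a₁⟩⋯⟨a_s⟩, ⟨b₁^{p^{n−m}}⟩⋯⟨b_t^{p^{n−m}}⟩])`
in the product ring `A^{ℕ₀}`. -/
theorem stmt1 {A : Type*} [Ring A] (p : ℕ) (hp : p.Prime) (m n : ℕ) (hmn : m ≤ n)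
    (as bs : List A) (has : as ≠ []) (hbs : bs ≠ []) :
    (Vb p)^[n] ((as.map (tm p)).prod) * (Vb p)^[m] ((bs.map (tm p)).prod)
      - (Vb p)^[m] ((bs.map (tm p)).prod) * (Vb p)^[n] ((as.map (tm p)).prod)
    = p ^ m •
        (Vb p)^[n]
          ((as.map (tm p)).prod * (bs.map (fun b => tm p (b ^ p ^ (n - m)))).prod
            - (bs.map (fun b => tm p (b ^ p ^ (n - m)))).prod * (as.map (tm p)).prod) := by
  funext k
  simp only [Pi.mul_apply, Pi.sub_apply, Pi.smul_apply, Vb_iterate, nsmul_eq_mul,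
    Nat.cast_pow]
  by_cases hn : n ≤ k
  · have hm : m ≤ k := le_trans hmn hn
    rw [if_pos hn, if_pos hm, if_pos hn, prod_shift]
    have : k - n + (n - m) = k - m := by omega
    rw [this, ← Nat.cast_pow, ← Nat.cast_pow, aux_comm, Nat.cast_pow, Nat.cast_pow]
  · rw [if_neg hn, if_neg hn, mul_zero]
    by_cases hm : m ≤ k
    · rw [if_pos hm]; simp
    · rw [if_neg hm]; simp
end

section
/- Let A be a (possibly non-commutative) associative unital ring and p a prime. Then the closure of [X(A),X(A)] in A^{ℕ₀} equals the closed additive subgroup of X(A) generated by the set { p^m·V^n([⟨a₁⟩⋯⟨a_s⟩, ⟨b₁^{p^{n−m}}⟩⋯⟨b_t^{p^{n−m}}⟩]) : m,n ∈ ℕ₀, m ≤ n, s,t ≥ 1, a_i, b_j ∈ A }, where [x,y] := xy − yx. -/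
/-- Generators of `X(A)`: all `V^m(⟨a₁⟩⋯⟨a_r⟩)` with `m ∈ ℕ₀`, `r ≥ 1`, `aᵢ ∈ A`. -/
def XAgen (p : ℕ) (A : Type*) [Ring A] : Set (ℕ → A) :=
  {x | ∃ (m : ℕ) (l : List A), l ≠ [] ∧ x = (Vb p)^[m] ((l.map (tm p)).prod)}

/-- `X(A)`: the topological closure of the additive subgroup generated by `XAgen`. -/
noncomputable def XA (p : ℕ) (A : Type*) [Ring A] [TopologicalSpace A] [DiscreteTopology A] :
    AddSubgroup (ℕ → A) :=
  (AddSubgroup.closure (XAgen p A)).topologicalClosure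

/-- The set of commutators `xy − yx` with `x, y ∈ X(A)`. -/
def commXA (p : ℕ) (A : Type*) [Ring A] [TopologicalSpace A] [DiscreteTopology A] :
    Set (ℕ → A) :=
  {z | ∃ x ∈ XA p A, ∃ y ∈ XA p A, z = x * y - y * x}

/-- The set `{ p^m·V^n([⟨a₁⟩⋯⟨a_s⟩, ⟨b₁^{p^{n−m}}⟩⋯⟨b_t^{p^{n−m}}⟩]) :
m ≤ n, s,t ≥ 1, aᵢ, bⱼ ∈ A }`. -/
def commGen (p : ℕ) (A : Type*) [Ring A] : Set (ℕ → A) :=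
  {z | ∃ m n : ℕ, m ≤ n ∧ ∃ as bs : List A, as ≠ [] ∧ bs ≠ [] ∧
    z = p ^ m •
      (Vb p)^[n]
        ((as.map (tm p)).prod * (bs.map (fun b => tm p (b ^ p ^ (n - m)))).prod
          - (bs.map (fun b => tm p (b ^ p ^ (n - m)))).prod * (as.map (tm p)).prod)}

/-
Write `σ` for the shift `(xₙ) ↦ (xₙ₊₁)`, a ring endomorphism of `A^ℕ₀` with `σ⟨b⟩ = ⟨b^p⟩`.
Componentwise, `x · V y = V (σx · y)`, `V y · x = V (y · σx)` and `V x · V y = p · V (x y)`;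
hence for `m ≤ n` the commutator `[Vⁿ x, Vᵐ y]` equals `pᵐ Vⁿ [x, σⁿ⁻ᵐ y]`. For `x, y` products of
Teichmüller elements this is exactly a generator of the right-hand side. Since the commutator is
biadditive and continuous in each variable, commutators of elements of `X(A)` lie in the closed
subgroup generated by the commutators of the topological generators of `X(A)`.
-/

section CommutatorClosure

variable {R : Type*} [Ring R] [TopologicalSpace R] [IsTopologicalRing R]

lemma commutator_mem_of_mem_topologicalClosure_right {S : Set R} {C : AddSubgroup R}
    (hC : IsClosed (C : Set R)) (u : R) (hu : ∀ v ∈ S, u * v - v * u ∈ C) :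
    ∀ v ∈ (AddSubgroup.closure S).topologicalClosure, u * v - v * u ∈ C := by
  let f : R →+ R := AddMonoidHom.mulLeft u - AddMonoidHom.mulRight u
  have hf : Continuous f := (continuous_const.mul continuous_id).sub
    (continuous_id.mul continuous_const)
  exact AddSubgroup.topologicalClosure_minimal _ (t := C.comap f)
    ((AddSubgroup.closure_le _).2 hu) (hC.preimage hf)

lemma commutator_mem_of_mem_topologicalClosure {S : Set R} {C : AddSubgroup R}
    (hC : IsClosed (C : Set R)) (hS : ∀ u ∈ S, ∀ v ∈ S, u * v - v * u ∈ C) :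
    ∀ u ∈ (AddSubgroup.closure S).topologicalClosure,
      ∀ v ∈ (AddSubgroup.closure S).topologicalClosure, u * v - v * u ∈ C := by
  have hSv : ∀ v ∈ (AddSubgroup.closure S).topologicalClosure, ∀ u ∈ S, v * u - u * v ∈ C :=
    fun v hv u hu => by
      simpa using C.neg_mem (commutator_mem_of_mem_topologicalClosure_right hC u (hS u hu) v hv)
  intro u hu v hv
  simpa using C.neg_mem (commutator_mem_of_mem_topologicalClosure_right hC v (hSv v hv) u hu)

end CommutatorClosure

section Verschiebung

variable {A : Type*} [Ring A] (p : ℕ)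

def VbHom : (ℕ → A) →+ (ℕ → A) where
  toFun := Vb p
  map_zero' := by funext n; cases n <;> simp [Vb]
  map_add' x y := by funext n; cases n <;> simp [Vb, mul_add]

lemma coe_VbHom : ⇑(VbHom (A := A) p) = Vb p := rfl

def seqShift (j : ℕ) : (ℕ → A) →+* (ℕ → A) :=
  RingHom.pi fun n => Pi.evalRingHom (fun _ => A) (n + j)

@[simp]
lemma seqShift_apply (j : ℕ) (x : ℕ → A) (n : ℕ) : seqShift j x n = x (n + j) := rfl

lemma mul_Vb (x y : ℕ → A) : x * Vb p y = Vb p (seqShift 1 x * y) := by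
  funext n
  cases n with
  | zero => simp [Vb]
  | succ n =>
    show x (n + 1) * ((p : A) * y n) = (p : A) * (x (n + 1) * y n)
    simp only [← nsmul_eq_mul, mul_smul_comm]

lemma Vb_mul (x y : ℕ → A) : Vb p y * x = Vb p (y * seqShift 1 x) := by
  funext n
  cases n with
  | zero => simp [Vb]
  | succ n => simp [Vb, mul_assoc]

lemma Vb_mul_Vb (x y : ℕ → A) : Vb p x * Vb p y = p • Vb p (x * y) := by
  funext n
  cases n with
  | zero => simp [Vb]
  | succ n =>
    show (p : A) * x n * ((p : A) * y n) = p • ((p : A) * (x n * y n))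
    simp only [← nsmul_eq_mul, smul_mul_assoc, mul_smul_comm]

lemma mul_Vb_iterate (j : ℕ) (x y : ℕ → A) :
    x * (Vb p)^[j] y = (Vb p)^[j] (seqShift j x * y) := by
  induction j generalizing x y with
  | zero => rfl
  | succ j ih =>
    rw [Function.iterate_succ_apply', Function.iterate_succ_apply', mul_Vb, ih]
    rfl

lemma Vb_iterate_mul (j : ℕ) (x y : ℕ → A) :
    (Vb p)^[j] y * x = (Vb p)^[j] (y * seqShift j x) := by
  induction j generalizing x y with
  | zero => rfl
  | succ j ih =>
    rw [Function.iterate_succ_apply', Function.iterate_succ_apply', Vb_mul, ih]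
    rfl

lemma Vb_iterate_mul_Vb_iterate (n : ℕ) (x y : ℕ → A) :
    (Vb p)^[n] x * (Vb p)^[n] y = p ^ n • (Vb p)^[n] (x * y) := by
  induction n generalizing x y with
  | zero => simp
  | succ n ih =>
    rw [Function.iterate_succ_apply', Function.iterate_succ_apply', Vb_mul_Vb, ih,
      Function.iterate_succ_apply', ← coe_VbHom, map_nsmul, smul_smul, pow_succ']

lemma Vb_iterate_commutator (m j : ℕ) (x y : ℕ → A) :
    (Vb p)^[m + j] x * (Vb p)^[m] y - (Vb p)^[m] y * (Vb p)^[m + j] x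
      = p ^ m • (Vb p)^[m + j] (x * seqShift j y - seqShift j y * x) := by
  simp only [Function.iterate_add_apply]
  rw [Vb_iterate_mul_Vb_iterate, Vb_iterate_mul, Vb_iterate_mul_Vb_iterate, mul_Vb_iterate,
    ← smul_sub, ← coe_VbHom, iterate_map_sub, iterate_map_sub]

lemma seqShift_tm (j : ℕ) (a : A) : seqShift j (tm p a) = tm p (a ^ p ^ j) := by
  funext n
  simp only [seqShift_apply, tm, ← pow_mul, ← pow_add, Nat.add_comm]

lemma seqShift_prod_tm (j : ℕ) (l : List A) :
    seqShift j (l.map (tm p)).prod = (l.map fun a => tm p (a ^ p ^ j)).prod := by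
  rw [map_list_prod, List.map_map]
  exact congrArg List.prod (List.map_congr_left fun a _ => seqShift_tm p j a)

lemma Vb_iterate_prod_tm_commutator {m n : ℕ} (h : m ≤ n) (as bs : List A) :
    (Vb p)^[n] (as.map (tm p)).prod * (Vb p)^[m] (bs.map (tm p)).prod
      - (Vb p)^[m] (bs.map (tm p)).prod * (Vb p)^[n] (as.map (tm p)).prod
    = p ^ m • (Vb p)^[n]
        ((as.map (tm p)).prod * (bs.map fun b => tm p (b ^ p ^ (n - m))).prod
          - (bs.map fun b => tm p (b ^ p ^ (n - m))).prod * (as.map (tm p)).prod) := by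
  obtain ⟨j, rfl⟩ := Nat.exists_eq_add_of_le h
  rw [Nat.add_sub_cancel_left, ← seqShift_prod_tm]
  exact Vb_iterate_commutator p m j _ _

end Verschiebung

section Commutators

variable (p : ℕ) (A : Type*) [Ring A]

lemma XAgen_subset_XA [TopologicalSpace A] [DiscreteTopology A] :
    XAgen p A ⊆ (XA p A : Set (ℕ → A)) :=
  fun _ hx => subset_closure (AddSubgroup.subset_closure hx)

lemma commGen_subset_commXA [TopologicalSpace A] [DiscreteTopology A] :
    commGen p A ⊆ commXA p A := by
  rintro z ⟨m, n, hmn, as, bs, has, hbs, rfl⟩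
  exact ⟨_, XAgen_subset_XA p A ⟨n, as, has, rfl⟩, _, XAgen_subset_XA p A ⟨m, bs, hbs, rfl⟩,
    (Vb_iterate_prod_tm_commutator p hmn as bs).symm⟩

lemma XAgen_commutator_mem_closure_commGen {u v : ℕ → A} (hu : u ∈ XAgen p A)
    (hv : v ∈ XAgen p A) : u * v - v * u ∈ AddSubgroup.closure (commGen p A) := by
  obtain ⟨n, as, has, rfl⟩ := hu
  obtain ⟨m, bs, hbs, rfl⟩ := hv
  rcases le_total m n with hmn | hnm
  · exact AddSubgroup.subset_closure
      ⟨m, n, hmn, as, bs, has, hbs, Vb_iterate_prod_tm_commutator p hmn as bs⟩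
  · rw [← neg_sub]
    exact neg_mem (AddSubgroup.subset_closure
      ⟨n, m, hnm, bs, as, hbs, has, Vb_iterate_prod_tm_commutator p hnm bs as⟩)

lemma commXA_subset_topologicalClosure_commGen [TopologicalSpace A] [DiscreteTopology A] :
    commXA p A ⊆ (AddSubgroup.closure (commGen p A)).topologicalClosure := by
  rintro _ ⟨x, hx, y, hy, rfl⟩
  refine commutator_mem_of_mem_topologicalClosure
    (AddSubgroup.isClosed_topologicalClosure _) (fun u hu v hv => ?_) x hx y hy
  exact AddSubgroup.le_topologicalClosure _ (XAgen_commutator_mem_closure_commGen p A hu hv)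

end Commutators

theorem stmt2_general (p : ℕ) (A : Type*) [Ring A]
    [TopologicalSpace A] [DiscreteTopology A] :
    closure ((AddSubgroup.closure (commXA p A) : AddSubgroup (ℕ → A)) : Set (ℕ → A))
      = closure ((AddSubgroup.closure (commGen p A) : AddSubgroup (ℕ → A)) : Set (ℕ → A)) :=
  subset_antisymm
    (closure_minimal
      ((AddSubgroup.closure_le _).2 (commXA_subset_topologicalClosure_commGen p A))
      (AddSubgroup.isClosed_topologicalClosure _))
    (closure_mono (AddSubgroup.closure_mono (commGen_subset_commXA p A)))

/-- the closure of `[X(A),X(A)]` in `A^{ℕ₀}` equals the closed additive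
subgroup generated by `commGen`. -/
theorem stmt2 (p : ℕ) (hp : p.Prime) (A : Type*) [Ring A]
    [TopologicalSpace A] [DiscreteTopology A] :
    closure ((AddSubgroup.closure (commXA p A) : AddSubgroup (ℕ → A)) : Set (ℕ → A))
      = closure ((AddSubgroup.closure (commGen p A) : AddSubgroup (ℕ → A)) : Set (ℕ → A)) :=
  stmt2_general p A
end

section
/- Let A = ℤ⟨X,Y⟩. Then for every c ∈ A, the element X²Y² − c² does not lie in the additive subgroup 2A + [A,A] + F⁵A. -/
/-- Words in the two letters `X, Y`. -/
abbrev FW := FreeMonoid (Fin 2)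

/-- `A = ℤ⟨X,Y⟩`, the free associative unital ring on two non-commuting variables,
realized as the monoid algebra of the free monoid on two letters. -/
abbrev A2 := MonoidAlgebra ℤ FW

/-- The variable `X`. -/
noncomputable def Xv : A2 := MonoidAlgebra.of ℤ FW (FreeMonoid.of 0)

/-- The variable `Y`. -/
noncomputable def Yv : A2 := MonoidAlgebra.of ℤ FW (FreeMonoid.of 1)

/-- The set `2A`. -/
def twoA : Set A2 := {x | ∃ a : A2, x = 2 * a}

/-- The set of commutators of `A`, generating `[A,A]`. -/
def commA : Set A2 := {x | ∃ a b : A2, x = a * b - b * a}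

/-- The words of length `≥ n`; they generate `FⁿA = ⊕_{i≥n} A_i` as an additive group. -/
def FdegSet (n : ℕ) : Set A2 :=
  {x | ∃ w : FW, n ≤ w.length ∧ x = MonoidAlgebra.of ℤ FW w}

/-!
Reduce modulo 2 and let `τ : 𝔽₂⟨X,Y⟩ → 𝔽₂` (`xxyyParity`) add up the coefficients of the four
cyclic rotations of the word `XXYY`. Since this set of words is closed under `uv ↦ vu`, `τ` is a
trace, so it kills commutators; it also kills `2A` and every word of length `≥ 5`. In
`τ(c²) = ∑ c_u c_v τ(uv)` the terms for `(u, v)` and `(v, u)` cancel in characteristic 2, and the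
diagonal terms vanish because no rotation of `XXYY` is a square. But `τ(X²Y²) = 1`.
-/

lemma Set.indicator_const_mul_comm {M β : Type*} [Mul M] [Zero β] {S : Set M}
    (hS : ∀ u v, u * v ∈ S → v * u ∈ S) (u v : M) (r : β) :
    S.indicator (fun _ => r) (u * v) = S.indicator (fun _ => r) (v * u) := by
  by_cases h : u * v ∈ S
  · rw [Set.indicator_of_mem h, Set.indicator_of_mem (hS u v h)]
  · rw [Set.indicator_of_notMem h, Set.indicator_of_notMem (mt (hS v u) h)]

namespace MonoidAlgebra

variable {k M : Type*}

section Semiring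

variable [Semiring k]

noncomputable def coeffSumOn (S : Set M) : MonoidAlgebra k M →+ k :=
  (Finsupp.liftAddHom fun m => S.indicator (fun _ => AddMonoidHom.id k) m).comp
    coeffAddEquiv.toAddMonoidHom

variable {S : Set M}

lemma coeffSumOn_single (m : M) (r : k) :
    coeffSumOn S (single m r) = S.indicator (fun _ => r) m := by
  change Finsupp.liftAddHom _ (Finsupp.single m r) = _
  by_cases hm : m ∈ S <;> simp [hm]

end Semiring

variable [CommSemiring k] [Mul M] {S : Set M}

lemma coeffSumOn_mul (a b : MonoidAlgebra k M) :
    coeffSumOn S (a * b) = ∑ u ∈ a.coeff.support, ∑ v ∈ b.coeff.support,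
      S.indicator (fun _ => a.coeff u * b.coeff v) (u * v) := by
  simp only [mul_def, Finsupp.sum, map_sum, coeffSumOn_single]

lemma coeffSumOn_mul_comm (hS : ∀ u v, u * v ∈ S → v * u ∈ S) (a b : MonoidAlgebra k M) :
    coeffSumOn S (a * b) = coeffSumOn S (b * a) := by
  rw [coeffSumOn_mul, coeffSumOn_mul, Finset.sum_comm]
  refine Finset.sum_congr rfl fun v _ => Finset.sum_congr rfl fun u _ => ?_
  rw [mul_comm, Set.indicator_const_mul_comm hS]

lemma coeffSumOn_mul_self [CharP k 2] (hS : ∀ u v, u * v ∈ S → v * u ∈ S)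
    (hsq : ∀ u, u * u ∉ S) (c : MonoidAlgebra k M) : coeffSumOn S (c * c) = 0 := by
  rw [coeffSumOn_mul, ← Finset.sum_product']
  refine Finset.sum_involution (fun p _ => p.swap) (fun p _ => ?_) (fun p _ hp hswap => hp ?_)
    (fun p hp => Finset.mem_product.2 (Finset.mem_product.1 hp).symm) fun p _ => p.swap_swap
  · rw [Prod.fst_swap, Prod.snd_swap, mul_comm, Set.indicator_const_mul_comm hS,
      CharTwo.add_self_eq_zero]
  · rw [show p.1 = p.2 from congrArg Prod.snd hswap, Set.indicator_of_notMem (hsq _)]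

end MonoidAlgebra

namespace FreeMonoid

variable {α : Type*}

def rotations (x : FreeMonoid α) : Set (FreeMonoid α) := {w | w.toList ~r x.toList}

lemma self_mem_rotations (x : FreeMonoid α) : x ∈ x.rotations := List.IsRotated.refl _

lemma length_eq_of_mem_rotations {x w : FreeMonoid α} (h : w ∈ x.rotations) :
    w.length = x.length :=
  h.perm.length_eq

lemma mul_comm_mem_rotations {x u v : FreeMonoid α} (h : u * v ∈ x.rotations) :
    v * u ∈ x.rotations := by
  simp only [rotations, Set.mem_ofPred_eq, toList_mul] at h ⊢
  exact List.isRotated_append.trans h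

end FreeMonoid

open FreeMonoid MonoidAlgebra

def xxyy : FW := ofList [0, 0, 1, 1]

lemma mul_self_notMem_rotations_xxyy (u : FW) : u * u ∉ xxyy.rotations := by
  intro h
  have hlen : u.length = 2 := by
    have : (u * u).length = 4 := length_eq_of_mem_rotations h
    rw [length_mul] at this
    omega
  obtain ⟨l, rfl⟩ := ofList.surjective u
  simp only [rotations, Set.mem_ofPred_eq, toList_mul, toList_ofList, xxyy] at h
  match l, hlen with
  | [a, b], _ => revert a b h; decide

noncomputable def xxyyParity : A2 →+ ZMod 2 :=
  (coeffSumOn xxyy.rotations).comp (mapRingHom FW (Int.castRingHom (ZMod 2))).toAddMonoidHom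

lemma xxyyParity_apply (a : A2) :
    xxyyParity a = coeffSumOn xxyy.rotations (mapRingHom FW (Int.castRingHom (ZMod 2)) a) :=
  rfl

lemma xxyyParity_mul_comm (a b : A2) : xxyyParity (a * b) = xxyyParity (b * a) := by
  rw [xxyyParity_apply, xxyyParity_apply, map_mul (mapRingHom FW _),
    map_mul (mapRingHom FW _)]
  exact coeffSumOn_mul_comm (fun _ _ => mul_comm_mem_rotations) _ _

lemma xxyyParity_mul_self (c : A2) : xxyyParity (c * c) = 0 := by
  rw [xxyyParity_apply, map_mul (mapRingHom FW _)]
  exact coeffSumOn_mul_self (fun _ _ => mul_comm_mem_rotations) mul_self_notMem_rotations_xxyy _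

lemma xxyyParity_of (w : FW) :
    xxyyParity (of ℤ FW w) = xxyy.rotations.indicator (fun _ => 1) w := by
  simp [xxyyParity_apply, coeffSumOn_single]

lemma closure_le_ker_xxyyParity :
    AddSubgroup.closure (twoA ∪ commA ∪ FdegSet 5) ≤ xxyyParity.ker := by
  rw [AddSubgroup.closure_le]
  rintro x ((⟨a, rfl⟩ | ⟨a, b, rfl⟩) | ⟨w, hw, rfl⟩) <;>
    simp only [SetLike.mem_coe, AddMonoidHom.mem_ker]
  · rw [two_mul, map_add, CharTwo.add_self_eq_zero]
  · rw [map_sub, xxyyParity_mul_comm, sub_self]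
  · refine (xxyyParity_of w).trans (Set.indicator_of_notMem (fun h => ?_) _)
    have : w.length = 4 := length_eq_of_mem_rotations h
    omega

lemma xxyyParity_X_sq_mul_Y_sq : xxyyParity (Xv ^ 2 * Yv ^ 2) = 1 := by
  have : Xv ^ 2 * Yv ^ 2 = of ℤ FW xxyy := by
    simp only [Xv, Yv, ← map_pow, ← map_mul]
    rfl
  rw [this, xxyyParity_of, Set.indicator_of_mem (self_mem_rotations _)]

/-- for every `c ∈ ℤ⟨X,Y⟩`, `X²Y² − c²` does not lie in `2A + [A,A] + F⁵A`
(the additive subgroup generated by `2A`, commutators, and words of length `≥ 5`). -/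
theorem stmt4 (c : A2) :
    Xv ^ 2 * Yv ^ 2 - c ^ 2 ∉ AddSubgroup.closure (twoA ∪ commA ∪ FdegSet 5) := by
  intro h
  have hker := closure_le_ker_xxyyParity h
  rw [AddMonoidHom.mem_ker, map_sub, xxyyParity_X_sq_mul_Y_sq, sq c, xxyyParity_mul_self,
    sub_zero] at hker
  exact one_ne_zero hker
end

section
/- Let A be a (possibly non-commutative) associative unital ring and p a prime. Then the image of the ghost map Ω : A^{ℕ₀} → A^{ℕ₀} is contained in X(A); in fact Ω(a₀,a₁,...) = Σ_{i=0}^{∞} V^i(⟨a_i⟩) (the series converging in the product topology) for all (a₀,a₁,...) ∈ A^{ℕ₀}. -/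
/-- The ghost map `Ω : A^{ℕ₀} → A^{ℕ₀}`,
`Ω(a)_n = ω_n(a₀,...,a_n) = a₀^{pⁿ} + p·a₁^{pⁿ⁻¹} + ⋯ + pⁿ·a_n`. -/
def Omega (p : ℕ) {A : Type*} [Ring A] (a : ℕ → A) : ℕ → A :=
  fun n => ∑ i ∈ Finset.range (n + 1), (p : A) ^ i * (a i) ^ p ^ (n - i)

lemma Vb_iter_apply (p : ℕ) {A : Type*} [Ring A] (x : ℕ → A) :
    ∀ (i n : ℕ), (Vb p)^[i] x n = if i ≤ n then (p : A) ^ i * x (n - i) else 0 := by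
  intro i
  induction i with
  | zero => intro n; simp
  | succ i ih =>
    intro n
    rw [Function.iterate_succ_apply']
    cases n with
    | zero => simp [Vb]
    | succ n =>
      show (p : A) * ((Vb p)^[i] x n) = _
      rw [ih n]
      by_cases h : i ≤ n
      · rw [if_pos h, if_pos (Nat.succ_le_succ h), Nat.succ_sub_succ, ← mul_assoc,
          pow_succ']
      · rw [if_neg h, if_neg (fun hc => h (Nat.le_of_succ_le_succ hc)), mul_zero]

lemma term_apply (p : ℕ) {A : Type*} [Ring A] (a : ℕ → A) (i n : ℕ) :
    (Vb p)^[i] (tm p (a i)) n = if i ≤ n then (p : A) ^ i * (a i) ^ p ^ (n - i) else 0 := by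
  rw [Vb_iter_apply]; rfl

/-- the image of the ghost map `Ω` lies in `X(A)`; in fact
`Ω(a₀,a₁,...) = Σ_{i=0}^∞ V^i(⟨aᵢ⟩)`, the series converging in the product topology. -/
theorem stmt9 (p : ℕ) (hp : p.Prime) (A : Type*) [Ring A]
    [TopologicalSpace A] [DiscreteTopology A] (a : ℕ → A) :
    Omega p a ∈ XA p A ∧ HasSum (fun i => (Vb p)^[i] (tm p (a i))) (Omega p a) := by
  have hsum : HasSum (fun i => (Vb p)^[i] (tm p (a i))) (Omega p a) := by
    rw [Pi.hasSum]
    intro n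
    have : Omega p a n = ∑ i ∈ Finset.range (n + 1), (Vb p)^[i] (tm p (a i)) n := by
      apply Finset.sum_congr rfl
      intro i hi
      rw [term_apply, if_pos (Nat.lt_succ_iff.mp (Finset.mem_range.mp hi))]
    rw [this]
    apply hasSum_sum_of_ne_finset_zero
    intro i hi
    rw [term_apply, if_neg]
    exact fun h => hi (Finset.mem_range.mpr (Nat.lt_succ_of_le h))
  refine ⟨?_, hsum⟩
  have hmem : ∀ i, (Vb p)^[i] (tm p (a i)) ∈ XA p A := by
    intro i
    apply AddSubgroup.le_topologicalClosure
    apply AddSubgroup.subset_closure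
    exact ⟨i, [a i], by simp⟩
  have hclosed : IsClosed (XA p A : Set (ℕ → A)) :=
    (AddSubgroup.closure (XAgen p A)).isClosed_topologicalClosure
  exact hclosed.mem_of_tendsto hsum.tendsto_sum_nat
    (Filter.Eventually.of_forall fun s => AddSubgroup.sum_mem _ fun i _ => hmem i)
end

section
/- Let A = ℤ⟨X,Y⟩, p a prime, and let φ : A → A be the unique additive group homomorphism with φ(w) = w^p for every word w in X, Y (including the empty word). Then φ([A,A]) ⊆ [A,A]. -/
/-!
For words `u, v` the difference `φ(uv) - φ(vu) = (uv)^p - (vu)^p` is a commutator, since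
`(xy)^(n+1) = x · (yx)^n y` and `(yx)^(n+1) = (yx)^n y · x`. As `(a, b) ↦ φ(ab) - φ(ba)` is
biadditive and words generate `A` additively, `φ(ab - ba) ∈ [A,A]` for all `a, b`.
-/

namespace MonoidAlgebra

variable {G : Type*} [Monoid G]

theorem int_closure_range_of : AddSubgroup.closure (Set.range (of ℤ G)) = ⊤ := by
  refine eq_top_iff.2 fun x _ ↦ x.induction_on ?_ ?_ ?_
  · exact fun m ↦ AddSubgroup.subset_closure ⟨m, rfl⟩
  · exact fun _ _ ↦ add_mem
  · exact fun r _ h ↦ zsmul_mem h r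

theorem int_biadditive_mem_of_forall_of {N : Type*} [AddCommGroup N] {S : AddSubgroup N}
    (B : MonoidAlgebra ℤ G →+ MonoidAlgebra ℤ G →+ N) (h : ∀ u v, B (of ℤ G u) (of ℤ G v) ∈ S)
    (a b : MonoidAlgebra ℤ G) : B a b ∈ S := by
  have hof (u : G) : ∀ b, B (of ℤ G u) b ∈ S := by
    suffices ⊤ ≤ S.comap (B (of ℤ G u)) from fun b ↦ this trivial
    rw [← int_closure_range_of, AddSubgroup.closure_le]
    rintro _ ⟨v, rfl⟩
    exact h u v
  suffices ⊤ ≤ S.comap (B.flip b) from this trivial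
  rw [← int_closure_range_of, AddSubgroup.closure_le]
  rintro _ ⟨u, rfl⟩
  exact hof u b

end MonoidAlgebra

theorem pow_mul_sub_pow_mul_mem_closure_commA (x y : A2) (n : ℕ) :
    (x * y) ^ n - (y * x) ^ n ∈ AddSubgroup.closure commA := by
  cases n with
  | zero => simp
  | succ n =>
    refine AddSubgroup.subset_closure ⟨x, (y * x) ^ n * y, ?_⟩
    rw [pow_succ, pow_succ, ← mul_assoc, mul_pow_mul, mul_assoc, mul_assoc]

theorem stmt13_general (p : ℕ) (φ : A2 →+ A2)
    (hφ : ∀ w : FW, φ (MonoidAlgebra.of ℤ FW w) = (MonoidAlgebra.of ℤ FW w) ^ p) :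
    ∀ x ∈ AddSubgroup.closure commA, φ x ∈ AddSubgroup.closure commA := by
  let B : A2 →+ A2 →+ A2 := AddMonoidHom.mul.compr₂ φ - AddMonoidHom.mul.flip.compr₂ φ
  have hB_apply (a b : A2) : B a b = φ (a * b) - φ (b * a) := rfl
  have hB (u v : FW) : B (MonoidAlgebra.of ℤ FW u) (MonoidAlgebra.of ℤ FW v) ∈
      AddSubgroup.closure commA := by
    rw [hB_apply, ← map_mul (MonoidAlgebra.of ℤ FW), ← map_mul (MonoidAlgebra.of ℤ FW), hφ, hφ,
      map_mul, map_mul]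
    exact pow_mul_sub_pow_mul_mem_closure_commA _ _ p
  have hcomm : commA ⊆ (AddSubgroup.closure commA).comap φ := by
    rintro _ ⟨a, b, rfl⟩
    rw [SetLike.mem_coe, AddSubgroup.mem_comap, map_sub, ← hB_apply]
    exact MonoidAlgebra.int_biadditive_mem_of_forall_of B hB a b
  exact fun x hx ↦ (AddSubgroup.closure_le _).2 hcomm hx

/-- let `φ : A → A` be the (unique) additive group homomorphism with
`φ(w) = w^p` for every word `w` (including the empty word). Then `φ([A,A]) ⊆ [A,A]`. -/
theorem stmt13 (p : ℕ) (hp : p.Prime) (φ : A2 →+ A2)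
    (hφ : ∀ w : FW, φ (MonoidAlgebra.of ℤ FW w) = (MonoidAlgebra.of ℤ FW w) ^ p) :
    ∀ x ∈ AddSubgroup.closure commA, φ x ∈ AddSubgroup.closure commA :=
  stmt13_general p φ hφ
end

section
/- Let A = ℤ⟨X,Y⟩, p a prime, and let φ : A → A be the unique additive group homomorphism with φ(w) = w^p for every word w in X, Y. Then for all x ∈ A and all n ≥ 1, x^{p^n} − φ(x^{p^{n−1}}) lies in the additive subgroup p^nA + [A,A]. -/
/-- The set `pⁿA`. -/
def pnA (p n : ℕ) : Set A2 := {x | ∃ a : A2, x = (p : A2) ^ n * a}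

/-!
Write `x ^ m` as the sum of `c(l) • l.prod` over the words `l` of length `m` in the support of
`x`, `c(l)` being the product of the coefficients of the letters of `l`. Modulo commutators a
summand depends on `l` only up to rotation, and a word of length `p ^ (k + 1)` that is not a
`p`-fold repetition has exactly `p ^ (k + 1)` rotations. So, modulo commutators and `p ^ n`, the
sum over the words of length `p ^ n` only sees the repetitions `u ^ p` and equals
`∑ c(u) ^ p • u.prod ^ p`, while `φ (x ^ p ^ (n - 1))` is `∑ c(u) • u.prod ^ p`. Their
difference is handled by the same reduction one level down, where an orbit of size `p ^ k` is
paid for by `p ^ (n - k)` dividing `c ^ p ^ (n - k) - c ^ p ^ (n - k - 1)` (Fermat's little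
theorem, lifted).
-/

open Function List

namespace Function

theorem sum_eq_zero_of_minimalPeriod_nsmul_eq_zero {α M : Type*} [AddCommMonoid M]
    {f : α → α} {s : Finset α} {F : α → M} (hs : ∀ x ∈ s, f x ∈ s)
    (hper : ∀ x ∈ s, x ∈ periodicPts f) (hF : ∀ x, F (f x) = F x)
    (h0 : ∀ x ∈ s, minimalPeriod f x • F x = 0) : ∑ x ∈ s, F x = 0 := by
  classical
  let orbit : α → Finset α := fun x => (periodicOrbit f x).toFinset
  have mem_orbit {x y} (hx : x ∈ s) : y ∈ orbit x ↔ ∃ n, f^[n] x = y := by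
    rw [← mem_periodicOrbit_iff (hper x hx), periodicOrbit_def, Cycle.mem_coe_iff]
    exact List.mem_toFinset
  have iterate_mem {x} (hx : x ∈ s) (n : ℕ) : f^[n] x ∈ s := by
    induction n with
    | zero => exact hx
    | succ n ih => rw [iterate_succ_apply']; exact hs _ ih
  have F_iterate (x : α) (n : ℕ) : F (f^[n] x) = F x := by
    induction n with
    | zero => rfl
    | succ n ih => rw [iterate_succ_apply', hF, ih]
  refine Finset.sum_cancels_of_partition_cancels (Setoid.ker orbit) fun x hx => ?_
  have fiber : {y ∈ s | orbit y = orbit x} = orbit x := by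
    ext y
    simp only [Finset.mem_filter]
    constructor
    · rintro ⟨hy, hxy⟩
      exact hxy ▸ (mem_orbit hy).2 ⟨0, rfl⟩
    · intro hy
      obtain ⟨n, rfl⟩ := (mem_orbit hx).1 hy
      exact ⟨iterate_mem hx n, by simp [orbit, periodicOrbit_apply_iterate_eq (hper x hx)]⟩
  have card_orbit : (orbit x).card = minimalPeriod f x := by
    have hnodup := nodup_periodicOrbit (f := f) (x := x)
    rw [periodicOrbit_def, Cycle.nodup_coe_iff] at hnodup
    simp only [orbit, periodicOrbit_def, Cycle.coe_toFinset, List.toFinset_card_of_nodup hnodup,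
      length_map, length_range]
  calc ∑ y ∈ s with Setoid.ker orbit y x, F y = ∑ y ∈ orbit x, F y := by
        rw [← fiber]; congr! 2
    _ = ∑ _y ∈ orbit x, F x := Finset.sum_congr rfl fun y hy => by
        obtain ⟨n, rfl⟩ := (mem_orbit hx).1 hy
        exact F_iterate x n
    _ = 0 := by rw [Finset.sum_const, card_orbit, h0 x hx]

end Function

namespace List

variable {α : Type*}

theorem iterate_rotate_one (l : List α) (n : ℕ) : (rotate · 1)^[n] l = l.rotate n := by
  induction n with
  | zero => simp
  | succ n ih => rw [iterate_succ_apply', ih, rotate_rotate]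

theorem isPeriodicPt_rotate_one_iff {l : List α} {n : ℕ} :
    IsPeriodicPt (rotate · 1) n l ↔ l.rotate n = l := by
  rw [IsPeriodicPt, IsFixedPt, iterate_rotate_one]

theorem rotate_length_flatten_replicate (u : List α) (q : ℕ) :
    (replicate q u).flatten.rotate u.length = (replicate q u).flatten := by
  cases q with
  | zero => simp
  | succ q =>
    rw [replicate_succ, flatten_cons, rotate_append_length_eq, ← flatten_concat,
      ← replicate_succ', replicate_succ, flatten_cons]

theorem eq_flatten_replicate_of_append_comm {a l : List α} (h : a ++ l = l ++ a) (q : ℕ)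
    (hl : l.length = a.length * q) : l = (replicate q a).flatten := by
  induction q generalizing l with
  | zero => simpa using hl
  | succ q ih =>
    have hle : a.length ≤ l.length := by rw [hl]; exact Nat.le_mul_of_pos_right _ q.succ_pos
    have htake : l.take a.length = a := by
      simpa [take_append_of_le_length hle] using (congrArg (take a.length) h).symm
    rw [← take_append_drop a.length l, htake] at h ⊢
    have hcomm : a ++ l.drop a.length = l.drop a.length ++ a := by simpa using h
    rw [ih hcomm (by simp [hl, Nat.mul_succ]), replicate_succ, flatten_cons]

theorem eq_flatten_replicate_of_rotate_eq {l : List α} {d q : ℕ} (h : l.rotate d = l)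
    (hl : l.length = d * q) (hq : 0 < q) : l = (replicate q (l.take d)).flatten := by
  have hd : d ≤ l.length := by rw [hl]; exact Nat.le_mul_of_pos_right _ hq
  refine eq_flatten_replicate_of_append_comm ?_ q (by simp [hl, Nat.le_mul_of_pos_right _ hq])
  rw [rotate_eq_drop_append_take hd] at h
  calc take d l ++ l = take d l ++ (drop d l ++ take d l) := by rw [h]
    _ = l ++ take d l := by rw [← append_assoc, take_append_drop]

end List

namespace Finset

variable {α : Type*} [DecidableEq α]

def listsOfLength (t : Finset α) : ℕ → Finset (List α)
  | 0 => {[]}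
  | m + 1 => (t ×ˢ t.listsOfLength m).image fun y => y.1 :: y.2

theorem mem_listsOfLength {t : Finset α} {m : ℕ} {l : List α} :
    l ∈ t.listsOfLength m ↔ l.length = m ∧ ∀ a ∈ l, a ∈ t := by
  induction m generalizing l with
  | zero => simp +contextual [listsOfLength]
  | succ m ih =>
    cases l with
    | nil => simp [listsOfLength]
    | cons a l => simp [listsOfLength, ih, and_assoc, and_left_comm]

theorem pow_sum_eq_sum_listsOfLength {R : Type*} [Semiring R] (t : Finset α) (g : α → R)
    (m : ℕ) : (∑ a ∈ t, g a) ^ m = ∑ l ∈ t.listsOfLength m, (l.map g).prod := by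
  induction m with
  | zero => simp [listsOfLength]
  | succ m ih =>
    rw [pow_succ', ih, sum_mul_sum, listsOfLength, sum_image, sum_product]
    · simp
    · rintro ⟨a, l⟩ - ⟨b, l'⟩ - h
      simpa using h

theorem filter_rotate_eq_self_listsOfLength (t : Finset α) (d : ℕ) {q : ℕ} (hq : 0 < q) :
    {l ∈ t.listsOfLength (d * q) | l.rotate d = l} =
      (t.listsOfLength d).image fun u => (replicate q u).flatten := by
  ext l
  simp only [mem_filter, mem_image, mem_listsOfLength]
  constructor
  · rintro ⟨⟨hl, ht⟩, hrot⟩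
    refine ⟨l.take d, ⟨?_, fun a ha => ht a (mem_of_mem_take ha)⟩,
      (eq_flatten_replicate_of_rotate_eq hrot hl hq).symm⟩
    simp [hl, Nat.le_mul_of_pos_right _ hq]
  · rintro ⟨u, ⟨hu, ht⟩, rfl⟩
    refine ⟨⟨by simp [hu, mul_comm], fun a ha => ?_⟩,
      hu ▸ rotate_length_flatten_replicate u q⟩
    obtain ⟨v, hv, hav⟩ := mem_flatten.1 ha
    exact ht a (eq_of_mem_replicate hv ▸ hav)

theorem sum_listsOfLength_prime_pow_succ {M : Type*} [AddCommMonoid M] {p : ℕ} (hp : p.Prime)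
    (t : Finset α) (k : ℕ) {F : List α → M} (hF : ∀ l, F (l.rotate 1) = F l)
    (hF₀ : ∀ l, p ^ (k + 1) • F l = 0) :
    ∑ l ∈ t.listsOfLength (p ^ (k + 1)), F l =
      ∑ u ∈ t.listsOfLength (p ^ k), F (replicate p u).flatten := by
  have : Fact p.Prime := ⟨hp⟩
  have hB : ∑ l ∈ t.listsOfLength (p ^ (k + 1)) with ¬l.rotate (p ^ k) = l, F l = 0 := by
    have periodic {l} (hl : l ∈ t.listsOfLength (p ^ (k + 1))) :
        IsPeriodicPt (rotate · 1) (p ^ (k + 1)) l := by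
      rw [isPeriodicPt_rotate_one_iff, ← (mem_listsOfLength.1 hl).1, rotate_length]
    refine sum_eq_zero_of_minimalPeriod_nsmul_eq_zero (f := (rotate · 1)) ?_ ?_ hF ?_
    · simp only [mem_filter, mem_listsOfLength, length_rotate, mem_rotate, rotate_rotate]
      rintro l ⟨hl, hrot⟩
      refine ⟨hl, fun h => hrot (rotate_injective 1 ?_)⟩
      simpa only [rotate_rotate, add_comm] using h
    · exact fun l hl => mk_mem_periodicPts (pow_pos hp.pos _) (periodic (mem_filter.1 hl).1)
    · intro l hl
      rw [mem_filter, ← isPeriodicPt_rotate_one_iff] at hl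
      rw [minimalPeriod_eq_prime_pow hl.2 (periodic hl.1), hF₀]
  rw [← sum_filter_add_sum_filter_not _ (fun l => l.rotate (p ^ k) = l), hB, add_zero, pow_succ,
    filter_rotate_eq_self_listsOfLength t _ hp.pos, sum_image]
  intro u hu v hv h
  obtain ⟨q, hq⟩ := Nat.exists_eq_add_one_of_ne_zero hp.ne_zero
  simp only [hq, replicate_succ, flatten_cons] at h
  simpa [take_left' (mem_listsOfLength.1 hu).1, take_left' (mem_listsOfLength.1 hv).1] using
    congrArg (take (p ^ k)) h

end Finset

theorem Int.prime_pow_succ_dvd_pow_sub_pow {p : ℕ} (hp : p.Prime) (z : ℤ) (j : ℕ) :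
    (p : ℤ) ^ (j + 1) ∣ z ^ p ^ (j + 1) - z ^ p ^ j := by
  have := dvd_sub_pow_of_dvd_sub (Int.ModEq.pow_prime_eq_self hp z).symm.dvd j
  rwa [← pow_mul, ← pow_succ'] at this

theorem zsmul_eq_zero_of_natCast_dvd {Q : Type*} [AddCommGroup Q] {N : ℕ}
    (hQ : ∀ q : Q, N • q = 0) {z : ℤ} (hz : (N : ℤ) ∣ z) (q : Q) : z • q = 0 := by
  obtain ⟨m, rfl⟩ := hz
  rw [mul_comm, mul_zsmul, natCast_zsmul, hQ, zsmul_zero]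

theorem apply_mul_pow_comm {M β : Type*} [Monoid M] {θ : M → β}
    (hθ : ∀ a b, θ (a * b) = θ (b * a)) (a b : M) (r : ℕ) :
    θ ((a * b) ^ r) = θ ((b * a) ^ r) := by
  cases r with
  | zero => simp
  | succ r =>
    calc θ ((a * b) ^ (r + 1)) = θ (a * ((b * a) ^ r * b)) := by
          rw [pow_succ, ← mul_assoc, mul_pow_mul, mul_assoc]
      _ = θ ((b * a) ^ (r + 1)) := by rw [hθ, pow_succ, mul_assoc]

section WordTerm

variable {M Q : Type*} [Monoid M] [AddCommGroup Q] {θ : M → Q}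

/-- With `c` the coefficients of `x` and `θ w = τ (of w)`, `wordTerm c θ 1 1 l` and
`wordTerm c θ 1 p l` are the contributions of the word `l` to `τ (x ^ m)` and
`τ (φ (x ^ m))`. -/
def wordTerm (c : M → ℤ) (θ : M → Q) (e r : ℕ) (l : List M) : Q :=
  (l.map c).prod ^ e • θ (l.prod ^ r)

variable {c : M → ℤ} {e r : ℕ}

theorem wordTerm_rotate_one (hθ : ∀ a b, θ (a * b) = θ (b * a)) (l : List M) :
    wordTerm c θ e r (l.rotate 1) = wordTerm c θ e r l := by
  cases l with
  | nil => rfl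
  | cons a l =>
    simp [wordTerm, apply_mul_pow_comm hθ _ a, mul_comm (c a)]

theorem wordTerm_flatten_replicate (q : ℕ) (l : List M) :
    wordTerm c θ e r (replicate q l).flatten = wordTerm c θ (q * e) (q * r) l := by
  simp [wordTerm, pow_mul]

variable {p : ℕ}

theorem nsmul_wordTerm_sub_eq_zero (hp : p.Prime) {i j : ℕ}
    (hQ : ∀ q : Q, p ^ (i + j + 1) • q = 0) (l : List M) :
    p ^ i • (wordTerm c θ (p ^ (j + 1)) r l - wordTerm c θ (p ^ j) r l) = 0 := by
  rw [wordTerm, wordTerm, ← sub_smul, ← natCast_zsmul, smul_smul]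
  refine zsmul_eq_zero_of_natCast_dvd hQ ?_ _
  rw [Nat.cast_pow, add_assoc, pow_add, Nat.cast_pow]
  exact mul_dvd_mul_left _ (Int.prime_pow_succ_dvd_pow_sub_pow hp _ j)

theorem sum_wordTerm_prime_pow [DecidableEq M] (hp : p.Prime)
    (hθ : ∀ a b, θ (a * b) = θ (b * a)) (t : Finset M) (k j : ℕ)
    (hQ : ∀ q : Q, p ^ (k + j + 1) • q = 0) :
    ∑ l ∈ t.listsOfLength (p ^ k), wordTerm c θ (p ^ (j + 1)) (p ^ (j + 1)) l =
      ∑ l ∈ t.listsOfLength (p ^ k), wordTerm c θ (p ^ j) (p ^ (j + 1)) l := by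
  rw [← sub_eq_zero, ← Finset.sum_sub_distrib]
  induction k generalizing j with
  | zero =>
    refine Finset.sum_eq_zero fun l _ => ?_
    simpa using nsmul_wordTerm_sub_eq_zero (c := c) (θ := θ) (r := p ^ (j + 1)) hp (i := 0)
      (by simpa using hQ) l
  | succ k ih =>
    rw [Finset.sum_listsOfLength_prime_pow_succ hp t k
      (fun l => by simp only [wordTerm_rotate_one hθ])
      (nsmul_wordTerm_sub_eq_zero hp (by simpa [add_right_comm] using hQ))]
    simp only [wordTerm_flatten_replicate, ← pow_succ']
    exact ih (j + 1) (by simpa [add_right_comm, add_assoc] using hQ)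

end WordTerm

namespace MonoidAlgebra

theorem list_prod_map_single {ι R M : Type*} [Semiring R] [Monoid M] (l : List ι) (m : ι → M)
    (r : ι → R) :
    (l.map fun i => single (m i) (r i)).prod = single (l.map m).prod (l.map r).prod := by
  induction l with
  | nil => simp [one_def]
  | cons i l ih => simp [ih, single_mul_single]

theorem pow_eq_sum_listsOfLength {R M : Type*} [Semiring R] [Monoid M] [DecidableEq M]
    (x : MonoidAlgebra R M) (m : ℕ) :
    x ^ m = ∑ l ∈ x.coeff.support.listsOfLength m, single l.prod (l.map x.coeff).prod := by
  conv_lhs => rw [← sum_coeff_single x]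
  simp only [Finsupp.sum, Finset.pow_sum_eq_sum_listsOfLength, list_prod_map_single, map_id']

theorem apply_pow_prime_pow_succ_eq {M Q : Type*} [Monoid M] [AddCommGroup Q] {p : ℕ}
    (hp : p.Prime) (k : ℕ) (τ : MonoidAlgebra ℤ M →+ Q)
    (hτ : ∀ a b, τ (a * b) = τ (b * a))
    (hQ : ∀ q : Q, p ^ (k + 1) • q = 0) (φ : MonoidAlgebra ℤ M →+ MonoidAlgebra ℤ M)
    (hφ : ∀ w, φ (of ℤ M w) = of ℤ M w ^ p) (x : MonoidAlgebra ℤ M) :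
    τ (x ^ p ^ (k + 1)) = τ (φ (x ^ p ^ k)) := by
  classical
  set θ : M → Q := fun w => τ (of ℤ M w)
  have hθ (a b : M) : θ (a * b) = θ (b * a) := by simp only [θ, map_mul, hτ]
  have single_eq (w : M) (z : ℤ) : single w z = z • of ℤ M w := by
    rw [of_apply, smul_single', mul_one]
  have τ_pow (m : ℕ) :
      τ (x ^ m) = ∑ l ∈ x.coeff.support.listsOfLength m, wordTerm x.coeff θ 1 1 l := by
    rw [pow_eq_sum_listsOfLength, map_sum]
    refine Finset.sum_congr rfl fun l _ => ?_
    rw [single_eq, map_zsmul, wordTerm, pow_one, pow_one]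
  have τ_φ_pow (m : ℕ) :
      τ (φ (x ^ m)) = ∑ l ∈ x.coeff.support.listsOfLength m, wordTerm x.coeff θ 1 p l := by
    rw [pow_eq_sum_listsOfLength, map_sum, map_sum]
    refine Finset.sum_congr rfl fun l _ => ?_
    rw [single_eq, map_zsmul, map_zsmul, hφ, ← map_pow, wordTerm, pow_one]
  calc τ (x ^ p ^ (k + 1))
      = ∑ l ∈ x.coeff.support.listsOfLength (p ^ k), wordTerm x.coeff θ p p l := by
        rw [τ_pow, Finset.sum_listsOfLength_prime_pow_succ hp _ k (wordTerm_rotate_one hθ)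
          fun l => hQ _]
        simp only [wordTerm_flatten_replicate, mul_one]
    _ = ∑ l ∈ x.coeff.support.listsOfLength (p ^ k), wordTerm x.coeff θ 1 p l := by
        simpa using sum_wordTerm_prime_pow hp hθ _ k 0 hQ
    _ = τ (φ (x ^ p ^ k)) := (τ_φ_pow _).symm

end MonoidAlgebra

/-- let `φ : A → A` be the (unique) additive group homomorphism with
`φ(w) = w^p` for every word `w`. Then for all `x ∈ A` and all `n ≥ 1`,
`x^{pⁿ} − φ(x^{pⁿ⁻¹}) ∈ pⁿA + [A,A]`. -/
theorem stmt14 (p : ℕ) (hp : p.Prime) (φ : A2 →+ A2)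
    (hφ : ∀ w : FW, φ (MonoidAlgebra.of ℤ FW w) = (MonoidAlgebra.of ℤ FW w) ^ p)
    (x : A2) (n : ℕ) (hn : 1 ≤ n) :
    x ^ p ^ n - φ (x ^ p ^ (n - 1)) ∈ AddSubgroup.closure (pnA p n ∪ commA) := by
  obtain ⟨k, rfl⟩ := Nat.exists_eq_add_of_le' hn
  set G := AddSubgroup.closure (pnA p (k + 1) ∪ commA)
  have comm_mem (a b : A2) : a * b - b * a ∈ G :=
    AddSubgroup.subset_closure (.inr ⟨a, b, rfl⟩)
  have pow_nsmul_mem (a : A2) : p ^ (k + 1) • a ∈ G :=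
    AddSubgroup.subset_closure (.inl ⟨a, by rw [nsmul_eq_mul, Nat.cast_pow]⟩)
  rw [Nat.add_sub_cancel, ← QuotientAddGroup.eq_iff_sub_mem]
  refine MonoidAlgebra.apply_pow_prime_pow_succ_eq hp k (QuotientAddGroup.mk' G)
    (fun a b => (QuotientAddGroup.eq_iff_sub_mem).2 (comm_mem a b)) (fun q => ?_) φ hφ x
  induction q using QuotientAddGroup.induction_on with
  | H a => exact (QuotientAddGroup.eq_zero_iff _).2 (pow_nsmul_mem a)
end

section
/- Let A = ℤ⟨X,Y⟩ and p a prime. For every sequence (ε₀, ε₁, ε₂, ...) with all ε_n ∈ [A,A], there exists a sequence (r₀, r₁, r₂, ...) ∈ A^{ℕ₀} with r₀ = ε₀ such that for every n ≥ 0 the ghost component ω_n(r₀,...,r_n) = r₀^{p^n} + p·r₁^{p^{n−1}} + ... + p^n·r_n lies in [A,A]. -/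
/-- The `n`-th ghost polynomial `ω_n(a₀,...,a_n) = a₀^{pⁿ} + p·a₁^{pⁿ⁻¹} + ⋯ + pⁿ·a_n`. -/
noncomputable def ghost (p : ℕ) (a : ℕ → A2) (n : ℕ) : A2 :=
  ∑ i ∈ Finset.range (n + 1), (p : A2) ^ i * (a i) ^ p ^ (n - i)

/-!
`A/[A,A]` is the free abelian group on cyclic words, so `r_{n+1}` can be chosen as soon as
every cyclic-word coefficient of `Y = ∑_{i ≤ n} pⁱ r_i^{p^{n+1-i}}` is divisible by `p^{n+1}`.
For `ψ` with `ψ(ab) = ψ(ba)` let `tr_ψ(∑ a_m m) = ∑ a_m ψ(m)`. The necklace congruence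
`tr_ψ(z^{p^{k+1}}) ≡ tr_{ψ(·^p)}(z^{p^k}) mod p^{k+1}`, applied to `z = r_i`, gives
`tr_ψ(Y) ≡ tr_{ψ(·^p)}(ω_n(r)) = 0 mod p^{n+1}`, because `tr_{ψ(·^p)}` kills `[A,A]`.

The congruence comes from expanding `z^L` as a sum over sequences `ℤ/L → supp z`, on which
`ℤ/L` acts by rotation. For `L = p^{j+1}` every orbit is either free, contributing a multiple of
`p^{j+1}`, or consists of `p`-fold repetitions of sequences of length `p^j`; an induction on `j`
using `a^{p^{i+1}} ≡ a^{p^i} mod p^{i+1}` handles the coefficients.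
-/

theorem Int.pow_succ_dvd_pow_pow_succ_sub_pow_pow {p : ℕ} (hp : p.Prime) (a : ℤ) (i : ℕ) :
    (p : ℤ) ^ (i + 1) ∣ a ^ p ^ (i + 1) - a ^ p ^ i := by
  rw [pow_succ' p, pow_mul]
  exact dvd_sub_pow_of_dvd_sub (Int.ModEq.pow_prime_eq_self hp a).symm.dvd i

theorem Finsupp.exists_eq_zsmul_of_forall_dvd {α : Type*} {N : ℤ} (f : α →₀ ℤ)
    (h : ∀ a, N ∣ f a) : ∃ G, f = N • G :=
  ⟨f.mapRange (· / N) (Int.zero_ediv N), by ext a; simp [Int.mul_ediv_cancel' (h a)]⟩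

theorem exists_seq_of_exists_update {α : Type*} (P : (ℕ → α) → ℕ → Prop)
    (hP : ∀ n r r', (∀ i ≤ n, r i = r' i) → P r n → P r' n) (r₀ : ℕ → α) (h₀ : P r₀ 0)
    (hstep : ∀ r n, P r n → ∃ x, P (Function.update r (n + 1) x) (n + 1)) :
    ∃ r, r 0 = r₀ 0 ∧ ∀ n, P r n := by
  have : Nonempty α := ⟨r₀ 0⟩
  choose! f hf using hstep
  let seq : ℕ → ℕ → α := fun n =>
    Nat.rec r₀ (fun n s => Function.update s (n + 1) (f s n)) n
  have hseq : ∀ n, P (seq n) n := by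
    intro n
    induction n with
    | zero => exact h₀
    | succ n ih => exact hf _ _ ih
  have hstable : ∀ n i, i ≤ n → seq n i = seq i i := by
    intro n
    induction n with
    | zero => intro i hi; rw [Nat.le_zero.1 hi]
    | succ n ih =>
      intro i hi
      rcases Nat.lt_or_eq_of_le hi with hi | rfl
      · exact (Function.update_of_ne (by omega) _ _).trans (ih i (by omega))
      · rfl
  exact ⟨fun i => seq i i, rfl, fun n => hP n _ _ (fun i hi => hstable n i hi) (hseq n)⟩

theorem natCast_pow_mul_eq_zsmul {R : Type*} [Ring R] (p i : ℕ) (y : R) :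
    (p : R) ^ i * y = ((p : ℤ) ^ i) • y := by
  rw [zsmul_eq_mul]
  push_cast
  rfl

theorem List.IsRotated.exists_eq_append {α : Type*} {l l' : List α} (h : l ~r l') :
    ∃ a b, l = a ++ b ∧ l' = b ++ a := by
  obtain ⟨m, hm, rfl⟩ := List.isRotated_iff_mod.1 h
  exact ⟨l.take m, l.drop m, (List.take_append_drop m l).symm,
    List.rotate_eq_drop_append_take hm⟩

theorem List.ofFn_comp_add_eq_rotate {α : Type*} {L : ℕ} [NeZero L] (f : Fin L → α)
    (k : Fin L) : List.ofFn (fun i => f (i + k)) = (List.ofFn f).rotate k := by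
  refine List.ext_getElem (by simp) fun i h₁ h₂ => ?_
  simp only [List.getElem_ofFn, List.getElem_rotate, List.length_ofFn]
  exact congrArg f (Fin.ext (by simp [Fin.val_add]))

theorem Fin.modNat_surjective {m n : ℕ} [NeZero m] :
    Function.Surjective (Fin.modNat : Fin (m * n) → Fin n) := fun y =>
  ⟨⟨y, y.isLt.trans_le (Nat.le_mul_of_pos_left n (NeZero.pos m))⟩,
    Fin.ext (Nat.mod_eq_of_lt y.isLt)⟩

theorem Fintype.sum_pow_eq_sum_ofFn_prod {R S : Type*} [Semiring R] [Fintype S] (f : S → R)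
    (L : ℕ) : (∑ s, f s) ^ L = ∑ g : Fin L → S, (List.ofFn fun i => f (g i)).prod := by
  induction L with
  | zero => simp
  | succ L ih =>
    rw [pow_succ', ih, Finset.sum_mul_sum, ← Fintype.sum_prod_type',
      ← (Fin.consEquiv fun _ => S).sum_comp]
    simp [List.ofFn_succ, Fin.consEquiv]

theorem MonoidAlgebra.list_prod_map_single_s15 {R M ι : Type*} [CommSemiring R] [Monoid M]
    (l : List ι) (m : ι → M) (r : ι → R) :
    (l.map fun i => single (m i) (r i)).prod = single (l.map m).prod (l.map r).prod := by
  induction l with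
  | nil => rfl
  | cons i l ih => simp [ih, single_mul_single]

theorem AddSubgroup.nsmul_mem_of_ne_bot {G : Type*} [AddCommGroup G] {p j : ℕ} (hp : p.Prime)
    (hG : Nat.card G = p ^ (j + 1)) {H : AddSubgroup G} (hH : H ≠ ⊥) (x : G) :
    p ^ j • x ∈ H := by
  obtain ⟨e, he, hindex⟩ := (Nat.dvd_prime_pow hp).1 (hG ▸ H.index_dvd_card)
  have hej : e ≤ j := by
    refine Nat.le_of_lt_succ (lt_of_le_of_ne he fun hej => hH ?_)
    rw [← AddSubgroup.card_eq_one]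
    have := H.index_mul_card
    rw [hindex, hG, hej] at this
    exact (Nat.mul_eq_left (pow_pos hp.pos _).ne').1 this
  rw [← Nat.sub_add_cancel hej, pow_add, mul_nsmul', ← hindex]
  exact H.nsmul_mem (H.nsmul_index_mem x) _

theorem AddAction.dvd_sum_of_dvd_ncard_orbit_mul {G X : Type*} [AddGroup G] [AddAction G X]
    [Fintype X] (F : X → ℤ) (hF : ∀ (g : G) x, F (g +ᵥ x) = F x) (N : ℤ)
    (h : ∀ x, N ∣ (orbit G x).ncard * F x) : N ∣ ∑ x, F x := by
  classical
  rw [← (selfEquivSigmaOrbits G X).symm.sum_comp, Fintype.sum_sigma]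
  refine Finset.dvd_sum fun ω _ => ?_
  have hconst : ∀ y : orbit G ω.out, F y = F ω.out := by
    rintro ⟨_, g, rfl⟩
    exact hF g _
  change N ∣ ∑ y : orbit G ω.out, F y
  rw [Fintype.sum_congr _ _ hconst, Finset.sum_const, Finset.card_univ,
    ← Nat.card_eq_fintype_card, Nat.card_coe_set_eq, nsmul_eq_mul]
  exact h _

def IsClassFunction {M C : Type*} [Monoid M] (ψ : M → C) : Prop :=
  ∀ a b, ψ (a * b) = ψ (b * a)

namespace IsClassFunction

variable {M C : Type*} [Monoid M] {ψ : M → C}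

theorem comp {D : Type*} (hψ : IsClassFunction ψ) (f : C → D) : IsClassFunction (f ∘ ψ) :=
  fun a b => congrArg f (hψ a b)

theorem apply_pow_mul_comm (hψ : IsClassFunction ψ) (a b : M) (n : ℕ) :
    ψ ((a * b) ^ n) = ψ ((b * a) ^ n) := by
  cases n with
  | zero => simp
  -- `(ab)ⁿ⁺¹ = a · b(ab)ⁿ` and `(ba)ⁿ⁺¹ = b(ab)ⁿ · a`
  | succ n => rw [pow_succ', mul_assoc, hψ, pow_succ, ← mul_assoc, mul_pow_mul]

theorem comp_pow (hψ : IsClassFunction ψ) (n : ℕ) : IsClassFunction fun m => ψ (m ^ n) :=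
  fun a b => hψ.apply_pow_mul_comm a b n

end IsClassFunction

section Necklaces

open Fin.NatCast AddAction

attribute [local instance] arrowAddAction

variable {S : Type*}

def seqProd {N : Type*} [Monoid N] (f : S → N) {L : ℕ} (g : Fin L → S) : N :=
  (List.ofFn fun i => f (g i)).prod

section Monoid

variable {N : Type*} [Monoid N] (f : S → N)

theorem exists_seqProd_vadd {L : ℕ} [NeZero L] (g : Fin L → S) (k : Fin L) :
    ∃ a b, seqProd f g = a * b ∧ seqProd f (k +ᵥ g) = b * a := by
  have hrot : (List.ofFn fun i => f ((k +ᵥ g) i)) =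
      (List.ofFn fun i => f (g i)).rotate (-k : Fin L) := by
    rw [← List.ofFn_comp_add_eq_rotate]
    exact congrArg List.ofFn (funext fun i => congrArg (fun x => f (g x)) (add_comm _ _))
  obtain ⟨a, b, hab, hba⟩ :=
    (List.IsRotated.forall (List.ofFn fun i => f (g i)) (-k : Fin L)).symm.exists_eq_append
  exact ⟨a.prod, b.prod, by rw [seqProd, hab, List.prod_append],
    by rw [seqProd, hrot, hba, List.prod_append]⟩

theorem IsClassFunction.apply_seqProd_vadd {C : Type*} {ψ : N → C} (hψ : IsClassFunction ψ)
    {L : ℕ} [NeZero L] (g : Fin L → S) (k : Fin L) :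
    ψ (seqProd f (k +ᵥ g)) = ψ (seqProd f g) := by
  obtain ⟨a, b, hg, hkg⟩ := exists_seqProd_vadd f g k
  rw [hg, hkg, hψ]

theorem seqProd_comp_modNat {m n : ℕ} (h : Fin n → S) :
    seqProd f (h ∘ Fin.modNat : Fin (m * n) → S) = seqProd f h ^ m := by
  have hmod (i : Fin m) (j : Fin n) (hij : i * n + j < m * n) :
      (⟨i * n + j, hij⟩ : Fin (m * n)).modNat = j :=
    Fin.ext (by simp [Nat.mod_eq_of_lt j.isLt])
  rw [seqProd, List.ofFn_mul, List.prod_flatten, List.map_ofFn]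
  simp only [Function.comp_def, hmod, List.ofFn_const, List.prod_replicate]
  rfl

end Monoid

theorem seqProd_vadd {K : Type*} [CommMonoid K] (c : S → K) {L : ℕ} [NeZero L]
    (g : Fin L → S) (k : Fin L) : seqProd c (k +ᵥ g) = seqProd c g :=
  IsClassFunction.apply_seqProd_vadd (ψ := id) c (fun a b => mul_comm a b) g k

theorem vadd_eq_self_iff_forall_apply_add {L : ℕ} [NeZero L] (k : Fin L) (g : Fin L → S) :
    k +ᵥ g = g ↔ ∀ x, g (x + k) = g x := by
  constructor
  · intro hk x
    calc g (x + k) = (k +ᵥ g) (x + k) := by rw [hk]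
      _ = g x := congrArg g (by rw [vadd_eq_add]; abel)
  · intro hk
    funext x
    calc (k +ᵥ g) x = g (-k + x + k) := (hk _).symm
      _ = g x := congrArg g (by abel)

theorem vadd_eq_self_iff_exists_comp_modNat {m n : ℕ} [NeZero (m * n)] (g : Fin (m * n) → S) :
    (n : Fin (m * n)) +ᵥ g = g ↔ ∃ h : Fin n → S, g = h ∘ Fin.modNat := by
  rw [vadd_eq_self_iff_forall_apply_add]
  constructor
  · intro hg
    have hper : Function.Periodic (fun t : ℕ => g t) n := fun t => by
      simpa only [Nat.cast_add] using hg t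
    refine ⟨fun y => g y.val, funext fun x => ?_⟩
    have hmod := hper.map_mod_nat x
    simp only [Fin.cast_val_eq_self] at hmod
    exact hmod.symm
  · rintro ⟨h, rfl⟩ x
    refine congrArg h (Fin.ext ?_)
    simp [Fin.val_add, Nat.mod_mod_of_dvd _ (dvd_mul_left n m), Nat.add_mod]

variable {p : ℕ} [Fact p.Prime]

theorem ncard_orbit_eq_of_vadd_ne_self {j : ℕ} {g : Fin (p * p ^ j) → S}
    (hg : ((p ^ j : ℕ) : Fin (p * p ^ j)) +ᵥ g ≠ g) :
    (orbit (Fin (p * p ^ j)) g).ncard = p ^ (j + 1) := by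
  have hcard : Nat.card (Fin (p * p ^ j)) = p ^ (j + 1) := by
    rw [Nat.card_eq_fintype_card, Fintype.card_fin, pow_succ']
  have hbot : stabilizer (Fin (p * p ^ j)) g = ⊥ := by
    by_contra hne
    have := AddSubgroup.nsmul_mem_of_ne_bot Fact.out hcard hne 1
    rw [nsmul_one] at this
    exact hg this
  rw [← index_stabilizer, hbot, AddSubgroup.index_bot, hcard]

theorem dvd_sum_sub_sum_comp_modNat [Fintype S] (j : ℕ) (F : (Fin (p * p ^ j) → S) → ℤ)
    (hF : ∀ (k : Fin (p * p ^ j)) g, F (k +ᵥ g) = F g) {D : ℤ} (hD : ∀ g, D ∣ F g) :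
    D * p ^ (j + 1) ∣ ∑ g, F g - ∑ h : Fin (p ^ j) → S, F (h ∘ Fin.modNat) := by
  classical
  set P : (Fin (p * p ^ j) → S) → Prop := fun g => ((p ^ j : ℕ) : Fin (p * p ^ j)) +ᵥ g = g
  have hP : Finset.univ.filter P =
      Finset.univ.image fun h : Fin (p ^ j) → S => h ∘ Fin.modNat := by
    ext g
    simp only [P, Finset.mem_filter, Finset.mem_univ, true_and, Finset.mem_image]
    rw [vadd_eq_self_iff_exists_comp_modNat]
    exact exists_congr fun h => eq_comm
  have hPinv : ∀ (k : Fin (p * p ^ j)) g, P (k +ᵥ g) ↔ P g := fun k g => by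
    simp only [P]
    rw [vadd_vadd, add_comm, ← vadd_vadd, vadd_left_cancel_iff]
  rw [← Finset.sum_filter_add_sum_filter_not Finset.univ P, hP,
    Finset.sum_image fun _ _ _ _ h => Fin.modNat_surjective.injective_comp_right h,
    add_sub_cancel_left, Finset.sum_filter]
  refine dvd_sum_of_dvd_ncard_orbit_mul (G := Fin (p * p ^ j)) _ (fun k g => ?_) _ fun g => ?_
  · simp only [hPinv k g, hF k g]
  split_ifs with hg
  · rw [mul_zero]
    exact dvd_zero _
  · rw [ncard_orbit_eq_of_vadd_ne_self hg, mul_comm, Nat.cast_pow]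
    exact mul_dvd_mul_left _ (hD g)

variable {M : Type*} [Monoid M] [Fintype S] (w : S → M) (c : S → ℤ)

theorem pow_dvd_sum_mul_pow_pow_succ_sub_pow_pow {ψ : M → ℤ} (hψ : IsClassFunction ψ)
    (i j : ℕ) : (p : ℤ) ^ (i + 1 + j) ∣ ∑ h : Fin (p ^ j) → S,
      ψ (seqProd w h) * (seqProd c h ^ p ^ (i + 1) - seqProd c h ^ p ^ i) := by
  induction j generalizing ψ i with
  | zero =>
    exact Finset.dvd_sum fun h _ =>
      dvd_mul_of_dvd_right (Int.pow_succ_dvd_pow_pow_succ_sub_pow_pow Fact.out _ i) _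
  | succ j ih =>
    rw [pow_succ' p j, show i + 1 + (j + 1) = i + 1 + 1 + j by ring]
    have hsplit := dvd_sum_sub_sum_comp_modNat (p := p) j
      (fun g => ψ (seqProd w g) * (seqProd c g ^ p ^ (i + 1) - seqProd c g ^ p ^ i))
      (fun k g => by rw [hψ.apply_seqProd_vadd, seqProd_vadd])
      (fun g => dvd_mul_of_dvd_right (Int.pow_succ_dvd_pow_pow_succ_sub_pow_pow Fact.out _ i) _)
    simp only [seqProd_comp_modNat, ← pow_mul, ← pow_succ'] at hsplit
    rw [← pow_add, show i + 1 + (j + 1) = i + 1 + 1 + j by ring] at hsplit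
    have := dvd_add hsplit (ih (hψ.comp_pow p) (i + 1))
    rwa [sub_add_cancel] at this

theorem pow_dvd_sum_sub_sum_pow {ψ : M → ℤ} (hψ : IsClassFunction ψ) (k : ℕ) :
    (p : ℤ) ^ (k + 1) ∣ ∑ g : Fin (p ^ (k + 1)) → S, ψ (seqProd w g) * seqProd c g -
      ∑ h : Fin (p ^ k) → S, ψ (seqProd w h ^ p) * seqProd c h := by
  rw [pow_succ' p k]
  have hsplit := dvd_sum_sub_sum_comp_modNat (p := p) k
    (fun g => ψ (seqProd w g) * seqProd c g)
    (fun k g => by rw [hψ.apply_seqProd_vadd, seqProd_vadd]) (fun _ => one_dvd _)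
  have hfrob := pow_dvd_sum_mul_pow_pow_succ_sub_pow_pow (p := p) w c (hψ.comp_pow p) 0 k
  simp only [seqProd_comp_modNat, one_mul] at hsplit
  simp only [zero_add, pow_zero, pow_one, add_comm 1 k] at hfrob
  rw [← sub_add_sub_cancel _ (∑ h : Fin (p ^ k) → S, ψ (seqProd w h ^ p) * seqProd c h ^ p)]
  refine dvd_add hsplit ?_
  simpa only [← Finset.sum_sub_distrib, mul_sub] using hfrob

end Necklaces

noncomputable def MonoidAlgebra.traceWith {M : Type*} (ψ : M → ℤ) :
    MonoidAlgebra ℤ M →ₗ[ℤ] ℤ :=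
  Finsupp.linearCombination ℤ ψ ∘ₗ (MonoidAlgebra.coeffLinearEquiv ℤ).toLinearMap

open MonoidAlgebra

@[simp]
theorem MonoidAlgebra.traceWith_single {M : Type*} {ψ : M → ℤ} (m : M) (a : ℤ) :
    traceWith ψ (single m a) = a * ψ m :=
  Finsupp.linearCombination_single ℤ a m

theorem MonoidAlgebra.traceWith_pow {M : Type*} [Monoid M] (ψ : M → ℤ)
    (z : MonoidAlgebra ℤ M) (L : ℕ) : traceWith ψ (z ^ L) = ∑ g : Fin L → z.coeff.support,
      ψ (seqProd (↑) g) * seqProd (fun s : z.coeff.support => z.coeff s) g := by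
  have hz : z = ∑ s : z.coeff.support, single (s : M) (z.coeff s) := by
    rw [Finset.sum_coe_sort z.coeff.support fun s => single s (z.coeff s)]
    exact (sum_coeff_single z).symm
  conv_lhs => rw [hz, Fintype.sum_pow_eq_sum_ofFn_prod]
  rw [map_sum]
  refine Fintype.sum_congr _ _ fun g => ?_
  rw [List.ofFn_comp' g fun s => single (s : M) (z.coeff s), list_prod_map_single_s15,
    traceWith_single, mul_comm, ← List.ofFn_comp', ← List.ofFn_comp']
  rfl

namespace IsClassFunction

variable {M : Type*} [Monoid M] {ψ : M → ℤ}

theorem traceWith_mul_comm (hψ : IsClassFunction ψ) (x y : MonoidAlgebra ℤ M) :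
    traceWith ψ (x * y) = traceWith ψ (y * x) := by
  induction x using induction_linear with
  | zero => simp
  | add x x' hx hx' => simp only [add_mul, mul_add, map_add, hx, hx']
  | single m a =>
    induction y using induction_linear with
    | zero => simp
    | add y y' hy hy' => simp only [add_mul, mul_add, map_add, hy, hy']
    | single n b => simp only [single_mul_single, traceWith_single, mul_comm a b, hψ m n]

theorem traceWith_eq_zero_of_mem_closure (hψ : IsClassFunction ψ)
    {x : MonoidAlgebra ℤ M} (hx : x ∈ AddSubgroup.closure {x | ∃ a b, x = a * b - b * a}) :
    traceWith ψ x = 0 := by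
  induction hx using AddSubgroup.closure_induction with
  | mem y hy =>
    obtain ⟨a, b, rfl⟩ := hy
    rw [map_sub, hψ.traceWith_mul_comm, sub_self]
  | zero => exact map_zero _
  | add y y' _ _ hy hy' => rw [map_add, hy, hy', add_zero]
  | neg y _ hy => rw [map_neg, hy, neg_zero]

theorem pow_dvd_traceWith_pow_sub (hψ : IsClassFunction ψ) {p : ℕ} [Fact p.Prime]
    (z : MonoidAlgebra ℤ M) (k : ℕ) :
    (p : ℤ) ^ (k + 1) ∣
      traceWith ψ (z ^ p ^ (k + 1)) - traceWith (fun m => ψ (m ^ p)) (z ^ p ^ k) := by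
  rw [traceWith_pow, traceWith_pow]
  exact pow_dvd_sum_sub_sum_pow _ _ hψ k

end IsClassFunction

namespace FreeMonoid

variable {α : Type*}

def toCycle (w : FreeMonoid α) : Cycle α := (w.toList : Cycle α)

theorem isClassFunction_toCycle : IsClassFunction (toCycle : FreeMonoid α → Cycle α) :=
  fun _ _ => Cycle.coe_eq_coe.2 List.isRotated_append

theorem toCycle_surjective : Function.Surjective (toCycle : FreeMonoid α → Cycle α) :=
  fun γ => Quotient.inductionOn γ fun l => ⟨ofList l, rfl⟩

theorem exists_mul_eq_of_toCycle_eq {u v : FreeMonoid α} (h : toCycle u = toCycle v) :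
    ∃ a b, u = a * b ∧ v = b * a := by
  obtain ⟨a, b, hu, hv⟩ := (Cycle.coe_eq_coe.1 h).exists_eq_append
  exact ⟨ofList a, ofList b, toList.injective hu, toList.injective hv⟩

noncomputable def cyclicTrace : MonoidAlgebra ℤ (FreeMonoid α) →ₗ[ℤ] Cycle α →₀ ℤ :=
  Finsupp.lmapDomain ℤ ℤ toCycle ∘ₗ (coeffLinearEquiv ℤ).toLinearMap

theorem cyclicTrace_single (w : FreeMonoid α) (a : ℤ) :
    cyclicTrace (single w a) = Finsupp.single (toCycle w) a :=
  Finsupp.mapDomain_single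

theorem cyclicTrace_apply [DecidableEq α] (x : MonoidAlgebra ℤ (FreeMonoid α)) (γ : Cycle α) :
    cyclicTrace x γ = traceWith (fun w => if toCycle w = γ then 1 else 0) x := by
  induction x using induction_linear with
  | zero => simp
  | add x y hx hy => simp only [map_add, Finsupp.add_apply, hx, hy]
  | single w a => simp [cyclicTrace_single, Finsupp.single_apply]

noncomputable def cycleLift : (Cycle α →₀ ℤ) →ₗ[ℤ] MonoidAlgebra ℤ (FreeMonoid α) :=
  (coeffLinearEquiv ℤ).symm.toLinearMap ∘ₗ
    Finsupp.lmapDomain ℤ ℤ (Function.surjInv toCycle_surjective)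

theorem cyclicTrace_cycleLift (G : Cycle α →₀ ℤ) : cyclicTrace (cycleLift G) = G := by
  change Finsupp.mapDomain toCycle (Finsupp.mapDomain (Function.surjInv toCycle_surjective) G) = G
  rw [← Finsupp.mapDomain_comp, Function.comp_def]
  simp only [Function.surjInv_eq]
  exact Finsupp.mapDomain_id

theorem sub_cycleLift_cyclicTrace_mem_closure (x : MonoidAlgebra ℤ (FreeMonoid α)) :
    x - cycleLift (cyclicTrace x) ∈ AddSubgroup.closure {x | ∃ a b, x = a * b - b * a} := by
  induction x using induction_linear with
  | zero => simp
  | add x y hx hy =>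
    rw [map_add, map_add, add_sub_add_comm]
    exact add_mem hx hy
  | single w a =>
    obtain ⟨u, v, rfl, hvu⟩ := exists_mul_eq_of_toCycle_eq
      (Function.surjInv_eq toCycle_surjective (toCycle w)).symm
    have hlift : cycleLift (cyclicTrace (single (u * v) a)) = single (v * u) a := by
      rw [cyclicTrace_single, ← hvu]
      exact congrArg (coeffLinearEquiv ℤ).symm Finsupp.mapDomain_single
    rw [hlift]
    refine AddSubgroup.subset_closure ⟨single u a, single v 1, ?_⟩
    simp [single_mul_single]

theorem mem_closure_iff_cyclicTrace_eq_zero [DecidableEq α]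
    (x : MonoidAlgebra ℤ (FreeMonoid α)) :
    x ∈ AddSubgroup.closure {x | ∃ a b, x = a * b - b * a} ↔ cyclicTrace x = 0 := by
  constructor
  · intro hx
    ext γ
    rw [cyclicTrace_apply, Finsupp.zero_apply]
    exact (isClassFunction_toCycle.comp fun c => if c = γ then 1 else 0
      ).traceWith_eq_zero_of_mem_closure hx
  · intro hx
    simpa [hx] using sub_cycleLift_cyclicTrace_mem_closure x

end FreeMonoid

open FreeMonoid

theorem ghost_congr {p n : ℕ} {r r' : ℕ → A2} (h : ∀ i ≤ n, r i = r' i) :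
    ghost p r n = ghost p r' n :=
  Finset.sum_congr rfl fun i hi => by rw [h i (Nat.lt_succ_iff.1 (Finset.mem_range.1 hi))]

theorem ghost_update_succ (p n : ℕ) (r : ℕ → A2) (x : A2) :
    ghost p (Function.update r (n + 1) x) (n + 1) =
      ∑ i ∈ Finset.range (n + 1), (p : A2) ^ i * r i ^ p ^ (n + 1 - i) +
        (p : A2) ^ (n + 1) * x := by
  rw [ghost, Finset.sum_range_succ, Function.update_self, Nat.sub_self, pow_zero, pow_one]
  congr 1
  refine Finset.sum_congr rfl fun i hi => ?_
  rw [Function.update_of_ne (by simp at hi; omega)]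

theorem exists_ghost_update_mem_closure {p : ℕ} [Fact p.Prime] (r : ℕ → A2) (n : ℕ)
    (h : ghost p r n ∈ AddSubgroup.closure commA) :
    ∃ x, ghost p (Function.update r (n + 1) x) (n + 1) ∈ AddSubgroup.closure commA := by
  simp only [ghost_update_succ]
  set Y := ∑ i ∈ Finset.range (n + 1), (p : A2) ^ i * r i ^ p ^ (n + 1 - i)
  have hdvd : ∀ γ, (p : ℤ) ^ (n + 1) ∣ cyclicTrace Y γ := by
    intro γ
    set ψ : FW → ℤ := fun w => if toCycle w = γ then 1 else 0
    have hψ : IsClassFunction ψ := isClassFunction_toCycle.comp fun c => if c = γ then 1 else 0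
    have hzero : traceWith (fun w => ψ (w ^ p)) (ghost p r n) = 0 :=
      (hψ.comp_pow p).traceWith_eq_zero_of_mem_closure h
    -- compare `tr_ψ(Y)` with `tr_{ψ(·^p)}(ω_n) = 0` termwise
    rw [cyclicTrace_apply, ← sub_zero (traceWith ψ Y), ← hzero]
    simp only [Y, ghost, map_sum, natCast_pow_mul_eq_zsmul (R := A2), map_zsmul, smul_eq_mul,
      ← Finset.sum_sub_distrib, ← mul_sub]
    refine Finset.dvd_sum fun i hi => ?_
    have hi : i ≤ n := Nat.lt_succ_iff.1 (Finset.mem_range.1 hi)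
    rw [show n + 1 - i = n - i + 1 by omega, show n + 1 = i + (n - i + 1) by omega, pow_add]
    exact mul_dvd_mul_left _ (hψ.pow_dvd_traceWith_pow_sub (r i) (n - i))
  obtain ⟨G, hG⟩ := Finsupp.exists_eq_zsmul_of_forall_dvd _ hdvd
  refine ⟨-cycleLift G, ?_⟩
  rw [commA, mem_closure_iff_cyclicTrace_eq_zero, map_add, natCast_pow_mul_eq_zsmul, map_zsmul,
    map_neg, cyclicTrace_cycleLift, hG, smul_neg, add_neg_cancel]

/-- for every sequence `(ε₀, ε₁, ...)` with all `ε_n ∈ [A,A]`, there is a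
sequence `(r₀, r₁, ...) ∈ A^{ℕ₀}` with `r₀ = ε₀` such that every ghost component
`ω_n(r₀,...,r_n)` lies in `[A,A]`. -/
theorem stmt15 (p : ℕ) (hp : p.Prime) (ε : ℕ → A2)
    (hε : ∀ n, ε n ∈ AddSubgroup.closure commA) :
    ∃ r : ℕ → A2, r 0 = ε 0 ∧ ∀ n, ghost p r n ∈ AddSubgroup.closure commA := by
  have := Fact.mk hp
  refine exists_seq_of_exists_update (fun r n => ghost p r n ∈ AddSubgroup.closure commA)
    (fun n r r' h => (ghost_congr h).subst) ε ?_ exists_ghost_update_mem_closure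
  simpa [ghost] using hε 0
end
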